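/- Let A, B₁, …, B_q be n×n real symmetric matrices, b ∈ ℝ^q, γ > 0 and η ∈ ℝ. For u ∈ ℝ^q set C(u) := −A − Σ_{i=1}^q uᵢBᵢ, and let P : ℝ^q → (n×n real matrices) assign to each u the positive part of C(u), i.e. for every u: P(u) is PSD, P(u) − C(u) is PSD, and ⟨P(u), P(u) − C(u)⟩ = 0. Then the function d_γ(u) := −(γ/2)‖P(u)‖_F² − uᵀb − η²/(2γ) is concave on ℝ^q. -/

import Mathlib

/-!
For `P = C₊` one has `‖P‖² = max_{X ⪰ 0} (2⟨X, C⟩ - ‖X‖²)`: every PSD `X` satisfies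
`2⟨X, C⟩ - ‖X‖² ≤ 2⟨X, P⟩ - ‖X‖² = ‖P‖² - ‖X - P‖² ≤ ‖P‖²` because `⟨X, P - C⟩ ≥ 0`, and
`X = P` attains the bound by complementarity. Composed with the affine map `u ↦ C(u)`, this
exhibits `u ↦ ‖P(u)‖²` as a pointwise maximum of affine functions, hence convex; `d_γ` is a
negative multiple of it minus an affine function.
-/

open Matrix
open scoped ComplexOrder

theorem ConvexOn.of_forall_le_of_exists_eq {𝕜 E β ι : Type*} [Semiring 𝕜] [PartialOrder 𝕜]
    [AddCommMonoid E] [SMul 𝕜 E] [AddCommMonoid β] [PartialOrder β] [IsOrderedAddMonoid β]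
    [Module 𝕜 β] [PosSMulMono 𝕜 β] {s : Set E} {f : ι → E → β} {g : E → β}
    (hs : Convex 𝕜 s) (hf : ∀ i, ConvexOn 𝕜 s (f i)) (hle : ∀ i, ∀ x ∈ s, f i x ≤ g x)
    (hg : ∀ x ∈ s, ∃ i, f i x = g x) : ConvexOn 𝕜 s g := by
  refine ⟨hs, fun x hx y hy a b ha hb hab => ?_⟩
  obtain ⟨i, hi⟩ := hg _ (hs hx hy ha hb hab)
  calc g (a • x + b • y) = f i (a • x + b • y) := hi.symm
    _ ≤ a • f i x + b • f i y := (hf i).2 hx hy ha hb hab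
    _ ≤ a • g x + b • g y := by gcongr <;> exact hle i _ ‹_›

namespace Matrix

variable {m n : Type*} [Fintype m] [Fintype n]

open scoped MatrixOrder in
theorem PosSemidef.trace_mul_nonneg {𝕜 : Type*} [RCLike 𝕜] {A B : Matrix n n 𝕜}
    (hA : A.PosSemidef) (hB : B.PosSemidef) : 0 ≤ (A * B).trace := by
  classical
  obtain ⟨S, rfl⟩ := CStarAlgebra.nonneg_iff_eq_star_mul_self.mp hA.nonneg
  rw [star_eq_conjTranspose, Matrix.mul_assoc, trace_mul_comm]
  exact (hB.mul_mul_conjTranspose_same S).trace_nonneg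

theorem trace_transpose_mul_self_nonneg (X : Matrix m n ℝ) : 0 ≤ (Xᵀ * X).trace :=
  (posSemidef_conjTranspose_mul_self X).trace_nonneg

theorem trace_transpose_mul_comm {R : Type*} [CommSemiring R] (X Y : Matrix m n R) :
    (Xᵀ * Y).trace = (Yᵀ * X).trace := by
  rw [← trace_transpose, transpose_mul, transpose_transpose]

theorem two_mul_trace_sub_le_of_posSemidef {X P C : Matrix n n ℝ} (hX : X.PosSemidef)
    (hPC : (P - C).PosSemidef) :
    2 * (Xᵀ * C).trace - (Xᵀ * X).trace ≤ (Pᵀ * P).trace := by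
  have hXPC : 0 ≤ (Xᵀ * (P - C)).trace := by
    rw [(isHermitian_iff_isSymm.mp hX.isHermitian).eq]
    exact hX.trace_mul_nonneg hPC
  have hXP := trace_transpose_mul_self_nonneg (X - P)
  simp only [transpose_sub, sub_mul, mul_sub, trace_sub] at hXPC hXP
  linarith [trace_transpose_mul_comm P X]

def IsPosPart (P C : Matrix n n ℝ) : Prop :=
  P.PosSemidef ∧ (P - C).PosSemidef ∧ (Pᵀ * (P - C)).trace = 0

theorem IsPosPart.two_mul_trace_sub_eq {P C : Matrix n n ℝ} (h : IsPosPart P C) :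
    2 * (Pᵀ * C).trace - (Pᵀ * P).trace = (Pᵀ * P).trace := by
  have := h.2.2
  rw [mul_sub, trace_sub] at this
  linarith

theorem convexOn_trace_transpose_mul_self_of_isPosPart {E : Type*} [AddCommGroup E]
    [Module ℝ E] (C : E →ᵃ[ℝ] Matrix n n ℝ) {P : E → Matrix n n ℝ}
    (hP : ∀ u, IsPosPart (P u) (C u)) : ConvexOn ℝ Set.univ fun u => ((P u)ᵀ * P u).trace := by
  have hlin (Y : Matrix n n ℝ) (c : ℝ) :
      ConvexOn ℝ Set.univ fun u => 2 * (Yᵀ * C u).trace - c := by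
    let L : Matrix n n ℝ →ₗ[ℝ] ℝ := (2 : ℝ) • (traceLinearMap n ℝ ℝ ∘ₗ LinearMap.mulLeft ℝ Yᵀ)
    refine (((L.convexOn convex_univ).add_const (-c)).comp_affineMap C).congr fun u _ => ?_
    simp [L, sub_eq_add_neg]
  refine ConvexOn.of_forall_le_of_exists_eq convex_univ (fun w => hlin (P w) ((P w)ᵀ * P w).trace)
    (fun w u _ => two_mul_trace_sub_le_of_posSemidef (hP w).1 (hP u).2.1)
    (fun u _ => ⟨u, (hP u).two_mul_trace_sub_eq⟩)

end Matrix

theorem sdp_dual_concave_general {n q : ℕ}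
    (A : Matrix (Fin n) (Fin n) ℝ)
    (B : Fin q → Matrix (Fin n) (Fin n) ℝ)
    (b : Fin q → ℝ) (γ : ℝ) (hγ : 0 < γ) (η : ℝ)
    (P : (Fin q → ℝ) → Matrix (Fin n) (Fin n) ℝ)
    (hP : ∀ u, (P u).PosSemidef)
    (hPC : ∀ u, (P u - (-A - ∑ i, u i • B i)).PosSemidef)
    (horth : ∀ u, ((P u)ᵀ * (P u - (-A - ∑ i, u i • B i))).trace = 0)
    (d : (Fin q → ℝ) → ℝ)
    (hd : ∀ u, d u = -(γ / 2) * ((P u)ᵀ * P u).trace - (∑ i, u i * b i) - η ^ 2 / (2 * γ)) :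
    ConcaveOn ℝ Set.univ d := by
  let C : (Fin q → ℝ) →ᵃ[ℝ] Matrix (Fin n) (Fin n) ℝ :=
    AffineMap.const ℝ _ (-A) - (Fintype.linearCombination ℝ B).toAffineMap
  have hC (u : Fin q → ℝ) : C u = -A - ∑ i, u i • B i := by
    simp [C, Fintype.linearCombination_apply]
  have hnorm := convexOn_trace_transpose_mul_self_of_isPosPart C
    (P := P) fun u => hC u ▸ ⟨hP u, hPC u, horth u⟩
  have hpair : ConvexOn ℝ Set.univ fun u : Fin q → ℝ => ∑ i, u i * b i := by
    refine ((Fintype.linearCombination ℝ b).convexOn convex_univ).congr fun u _ => ?_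
    simp [Fintype.linearCombination_apply]
  refine (((hnorm.smul (by positivity : (0 : ℝ) ≤ γ / 2)).neg.sub hpair).sub
    (convexOn_const (η ^ 2 / (2 * γ)) convex_univ)).congr fun u _ => ?_
  simp [hd]

/-- the dual objective `d_γ(u) = −(γ/2)‖(C(u))₊‖_F² − uᵀb − η²/(2γ)` is
concave on ℝ^q. -/
theorem sdp_dual_concave {n q : ℕ}
    (A : Matrix (Fin n) (Fin n) ℝ) (hA : A.IsSymm)
    (B : Fin q → Matrix (Fin n) (Fin n) ℝ) (hB : ∀ i, (B i).IsSymm)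
    (b : Fin q → ℝ) (γ : ℝ) (hγ : 0 < γ) (η : ℝ)
    (P : (Fin q → ℝ) → Matrix (Fin n) (Fin n) ℝ)
    (hP : ∀ u, (P u).PosSemidef)
    (hPC : ∀ u, (P u - (-A - ∑ i, u i • B i)).PosSemidef)
    (horth : ∀ u, ((P u)ᵀ * (P u - (-A - ∑ i, u i • B i))).trace = 0)
    (d : (Fin q → ℝ) → ℝ)
    (hd : ∀ u, d u = -(γ / 2) * ((P u)ᵀ * P u).trace - (∑ i, u i * b i) - η ^ 2 / (2 * γ)) :
    ConcaveOn ℝ Set.univ d :=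
  sdp_dual_concave_general A B b γ hγ η P hP hPC horth d hd
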